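/- Let M be a poset such that for all a ≤ b in M^D the interval [a,b]^{M^D} is a chain. Then an element p of M^D is the infimum in M^D of two incomparable elements of M if and only if p is the infimum in M^D of two incomparable elements of M^D; dually, p is the supremum in M^D of two incomparable elements of M if and only if p is the supremum in M^D of two incomparable elements of M^D. -/

import Mathlib

set_option autoImplicit false

section Preamble

/-- A *cut* of a poset `M`: a nonempty subset, bounded above, which equals the set of
lower bounds of its set of upper bounds. -/
def IsCut {M : Type*} [PartialOrder M] (J : Set M) : Prop :=
  J.Nonempty ∧ (upperBounds J).Nonempty ∧ lowerBounds (upperBounds J) = J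

/-- The Dedekind–MacNeille completion of `M`: the set of cuts, ordered by inclusion. -/
abbrev DMC (M : Type*) [PartialOrder M] : Type _ := {J : Set M // IsCut J}

/-- The canonical embedding of `M` into `DMC M`, `a ↦ {x | x ≤ a}`. -/
def principalCut {M : Type*} [PartialOrder M] (a : M) : DMC M :=
  ⟨Set.Iic a, ⟨a, le_refl a⟩, ⟨a, fun _ hx => hx⟩, by
    apply Set.Subset.antisymm
    · intro x hx
      exact hx (fun _ hy => hy)
    · exact subset_lowerBounds_upperBounds _⟩

/-- The image of `M` in its Dedekind–MacNeille completion (the principal cuts). -/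
def principalSet (M : Type*) [PartialOrder M] : Set (DMC M) :=
  Set.range (fun a : M => principalCut a)

/-- A 2-level poset: every element is minimal or maximal. -/
def IsTwoLevel (M : Type*) [PartialOrder M] : Prop :=
  ∀ x : M, IsMin x ∨ IsMax x

/-- The set `Min(M)` of minimal elements. -/
def minSet (M : Type*) [PartialOrder M] : Set M := {x | IsMin x}

/-- The set `Max(M)` of maximal elements. -/
def maxSet (M : Type*) [PartialOrder M] : Set M := {x | IsMax x}

/-- The comparability graph of a poset: `x` adjacent to `y` iff `x < y` or `y < x`. -/
def compGraph (M : Type*) [PartialOrder M] : SimpleGraph M where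
  Adj x y := x < y ∨ y < x
  symm := ⟨fun _ _ h => Or.symm h⟩
  loopless := ⟨fun x h => by rcases h with h | h <;> exact lt_irrefl x h⟩

/-- Upward ramification points of `M`: infima in `DMC M` of two incomparable elements of `M`. -/
def upRam (M : Type*) [PartialOrder M] : Set (DMC M) :=
  {p | ∃ a b : M, ¬ a ≤ b ∧ ¬ b ≤ a ∧ IsGLB {principalCut a, principalCut b} p}

/-- Downward ramification points of `M`: suprema in `DMC M` of two incomparable elements of `M`. -/
def downRam (M : Type*) [PartialOrder M] : Set (DMC M) :=
  {p | ∃ a b : M, ¬ a ≤ b ∧ ¬ b ≤ a ∧ IsLUB {principalCut a, principalCut b} p}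

/-- `M⁺ = M ∪ Ram(M)`, as a subset of `DMC M`. -/
def MPlus (M : Type*) [PartialOrder M] : Set (DMC M) :=
  principalSet M ∪ upRam M ∪ downRam M

/-- A 2-arc in a graph. -/
def IsTwoArc {V : Type*} (G : SimpleGraph V) (v₀ v₁ v₂ : V) : Prop :=
  G.Adj v₀ v₁ ∧ G.Adj v₁ v₂ ∧ v₀ ≠ v₂

/-- Local 1-arc-transitivity: every vertex stabilizer is transitive on neighbours. -/
def LocallyOneArcTransitive {V : Type*} (G : SimpleGraph V) : Prop :=
  ∀ v u w : V, G.Adj v u → G.Adj v w → ∃ g : G ≃g G, g v = v ∧ g u = w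

/-- Local 2-arc-transitivity: every vertex stabilizer is transitive on 2-arcs from that vertex. -/
def LocallyTwoArcTransitive {V : Type*} (G : SimpleGraph V) : Prop :=
  ∀ v u₁ w₁ u₂ w₂ : V, IsTwoArc G v u₁ w₁ → IsTwoArc G v u₂ w₂ →
    ∃ g : G ≃g G, g v = v ∧ g u₁ = u₂ ∧ g w₁ = w₂

/-- (Global) 1-arc-transitivity of a graph. -/
def OneArcTransitive {V : Type*} (G : SimpleGraph V) : Prop :=
  ∀ v₀ v₁ u₀ u₁ : V, G.Adj v₀ v₁ → G.Adj u₀ u₁ →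
    ∃ g : G ≃g G, g v₀ = u₀ ∧ g v₁ = u₁

/-- (Global) 2-arc-transitivity of a graph. -/
def TwoArcTransitive {V : Type*} (G : SimpleGraph V) : Prop :=
  ∀ v₀ v₁ v₂ u₀ u₁ u₂ : V, IsTwoArc G v₀ v₁ v₂ → IsTwoArc G u₀ u₁ u₂ →
    ∃ g : G ≃g G, g v₀ = u₀ ∧ g v₁ = u₁ ∧ g v₂ = u₂

/-- 3-CS-homogeneity: every isomorphism between connected 3-element induced subposets
extends to an automorphism. -/
def ThreeCSHomogeneous (M : Type*) [PartialOrder M] : Prop :=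
  ∀ A B : Set M, A.ncard = 3 → B.ncard = 3 →
    ((compGraph M).induce A).Connected → ((compGraph M).induce B).Connected →
    ∀ f : ↥A ≃o ↥B, ∃ g : M ≃o M, ∀ a : ↥A, g ↑a = ↑(f a)

/-- 2-CS-transitivity: the automorphism group is transitive on comparable pairs. -/
def TwoCSTransitive (M : Type*) [PartialOrder M] : Prop :=
  ∀ a b a' b' : M, a < b → a' < b' → ∃ g : M ≃o M, g a = a' ∧ g b = b'

/-- 3-CS-transitivity: for any two isomorphic connected 3-element induced subposets there
is an automorphism carrying one onto the other. -/
def ThreeCSTransitive (M : Type*) [PartialOrder M] : Prop :=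
  ∀ A B : Set M, A.ncard = 3 → B.ncard = 3 →
    ((compGraph M).induce A).Connected → ((compGraph M).induce B).Connected →
    Nonempty (↥A ≃o ↥B) → ∃ g : M ≃o M, ⇑g '' A = B

/-- A subset of a poset is a `k`-diamond if it consists of a least element, a greatest
element, and exactly `k` pairwise incomparable elements strictly in between. -/
def IsKDiamond {P : Type*} [PartialOrder P] (s : Set P) (k : ℕ) : Prop :=
  ∃ a b : P, a ∈ s ∧ b ∈ s ∧ a ≠ b ∧ (∀ z ∈ s, a ≤ z ∧ z ≤ b) ∧
    (s \ {a, b}).ncard = k ∧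
    ∀ z ∈ s \ ({a, b} : Set P), ∀ w ∈ s \ ({a, b} : Set P), z ≠ w → ¬ z ≤ w

end Preamble

/-!
If `p` is the infimum in `M^D` of incomparable `u`, `v`, pick `t ≥ u` and `t' ≥ v` in `M`.
Since intervals are chains, `u` and `v` have no common upper bound `s` (they would be comparable
in the chain `[p, s]`), so `t` and `t'` are incomparable. For `w ≤ t, t'`, the join `q = p ⊔ w` exists in `M^D` and
lies in `[p, t] ∩ [p, t']`; comparing it with `u` and `v` inside these intervals forces
`q ≤ u, v`, hence `w ≤ q ≤ p`. The statement about suprema is the order dual.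
-/

open OrderDual (ofDual)

section IntervalChains

variable {P Q : Type*} [Preorder P] [Preorder Q]

lemma mem_lowerBounds_pair {a b c : P} : c ∈ lowerBounds {a, b} ↔ c ≤ a ∧ c ≤ b := by
  simp [lowerBounds_insert]

lemma mem_upperBounds_pair {a b c : P} : c ∈ upperBounds {a, b} ↔ a ≤ c ∧ b ≤ c := by
  simp [upperBounds_insert]

variable (hchain : ∀ a b : P, a ≤ b → IsChain (· ≤ ·) (Set.Icc a b))
include hchain

lemma isChain_Icc_dual (a b : Pᵒᵈ) (hab : a ≤ b) : IsChain (· ≤ ·) (Set.Icc a b) :=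
  fun _ hx _ hy _ => ((hchain (ofDual b) (ofDual a) hab).total ⟨hx.2, hx.1⟩ ⟨hy.2, hy.1⟩).symm

lemma le_total_of_common_bounds {p s u v : P} (hpu : p ≤ u) (hpv : p ≤ v) (hus : u ≤ s)
    (hvs : v ≤ s) : u ≤ v ∨ v ≤ u :=
  (hchain p s (hpu.trans hus)).total ⟨hpu, hus⟩ ⟨hpv, hvs⟩

lemma not_le_of_incomparable_above {p s u v : P} (hpu : p ≤ u) (hpv : p ≤ v)
    (huv : ¬ u ≤ v) (hvu : ¬ v ≤ u) (hus : u ≤ s) : ¬ v ≤ s := fun hvs =>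
  (le_total_of_common_bounds hchain hpu hpv hus hvs).elim huv hvu

theorem IsGLB.exists_isGLB_of_cofinal
    (hsup : ∀ a b c : P, a ≤ c → b ≤ c → ∃ d, IsLUB {a, b} d)
    {e : Q → P} (he : Monotone e) (hcofinal : ∀ u, ∃ a, u ≤ e a)
    {p u v : P} (hp : IsGLB {u, v} p) (huv : ¬ u ≤ v) (hvu : ¬ v ≤ u) :
    ∃ a b : Q, ¬ a ≤ b ∧ ¬ b ≤ a ∧ IsGLB {e a, e b} p := by
  obtain ⟨hpu, hpv⟩ := mem_lowerBounds_pair.1 hp.1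
  have hno_ub : ∀ {s}, u ≤ s → ¬ v ≤ s :=
    not_le_of_incomparable_above hchain hpu hpv huv hvu
  have hno_ub' : ∀ {s}, v ≤ s → ¬ u ≤ s :=
    not_le_of_incomparable_above hchain hpv hpu hvu huv
  obtain ⟨a, hua⟩ := hcofinal u
  obtain ⟨b, hvb⟩ := hcofinal v
  have hpa := hpu.trans hua
  have hpb := hpv.trans hvb
  refine ⟨a, b, fun hab => hno_ub (hua.trans (he hab)) hvb,
    fun hba => hno_ub' (hvb.trans (he hba)) hua, mem_lowerBounds_pair.2 ⟨hpa, hpb⟩, ?_⟩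
  intro w hw
  obtain ⟨hwa, hwb⟩ := mem_lowerBounds_pair.1 hw
  obtain ⟨q, hq⟩ := hsup p w (e a) hpa hwa
  obtain ⟨hpq, hwq⟩ := mem_upperBounds_pair.1 hq.1
  have hqa : q ≤ e a := hq.2 (mem_upperBounds_pair.2 ⟨hpa, hwa⟩)
  have hqb : q ≤ e b := hq.2 (mem_upperBounds_pair.2 ⟨hpb, hwb⟩)
  have hqu : q ≤ u := (le_total_of_common_bounds hchain hpu hpq hua hqa).resolve_left
    fun huq => hno_ub (huq.trans hqb) hvb
  have hqv : q ≤ v := (le_total_of_common_bounds hchain hpv hpq hvb hqb).resolve_left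
    fun hvq => hno_ub' (hvq.trans hqa) hua
  exact hwq.trans (hp.2 (mem_lowerBounds_pair.2 ⟨hqu, hqv⟩))

theorem IsLUB.exists_isLUB_of_coinitial
    (hinf : ∀ a b c : P, c ≤ a → c ≤ b → ∃ d, IsGLB {a, b} d)
    {e : Q → P} (he : Monotone e) (hcoinitial : ∀ u, ∃ a, e a ≤ u)
    {p u v : P} (hp : IsLUB {u, v} p) (huv : ¬ u ≤ v) (hvu : ¬ v ≤ u) :
    ∃ a b : Q, ¬ a ≤ b ∧ ¬ b ≤ a ∧ IsLUB {e a, e b} p := by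
  obtain ⟨a, b, hab, hba, hp'⟩ := IsGLB.exists_isGLB_of_cofinal (P := Pᵒᵈ) (Q := Qᵒᵈ)
    (isChain_Icc_dual hchain) hinf he.dual hcoinitial hp.dual hvu huv
  exact ⟨a, b, hba, hab, hp'⟩

end IntervalChains

section Completion

variable {M : Type*} [PartialOrder M]

lemma principalCut_le_principalCut {a b : M} : principalCut a ≤ principalCut b ↔ a ≤ b :=
  Set.Iic_subset_Iic

lemma monotone_principalCut : Monotone (principalCut (M := M)) :=
  fun _ _ => principalCut_le_principalCut.2

lemma isCut_lowerBounds {T : Set M} (hT : T.Nonempty) (hlb : (lowerBounds T).Nonempty) :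
    IsCut (lowerBounds T) :=
  ⟨hlb, hT.mono (subset_upperBounds_lowerBounds T), gc_upperBounds_lowerBounds.u_l_u_eq_u T⟩

namespace DMC

lemma exists_le_principalCut (u : DMC M) : ∃ a, u ≤ principalCut a :=
  let ⟨a, ha⟩ := u.2.2.1
  ⟨a, fun _ hx => ha hx⟩

lemma exists_principalCut_le (u : DMC M) : ∃ a, principalCut a ≤ u := by
  obtain ⟨a, ha⟩ := u.2.1
  refine ⟨a, fun x (hxa : x ≤ a) => ?_⟩
  rw [← u.2.2.2] at ha ⊢
  exact fun s hs => hxa.trans (ha hs)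

lemma exists_isLUB_pair {u v w : DMC M} (hu : u ≤ w) (hv : v ≤ w) : ∃ s, IsLUB {u, v} s := by
  have hsub : u.1 ∪ v.1 ⊆ lowerBounds (upperBounds (u.1 ∪ v.1)) :=
    subset_lowerBounds_upperBounds _
  have hub : (upperBounds (u.1 ∪ v.1)).Nonempty :=
    w.2.2.1.mono (upperBounds_mono_set (Set.union_subset hu hv))
  refine ⟨⟨_, isCut_lowerBounds hub (u.2.1.mono (Set.subset_union_left.trans hsub))⟩,
    mem_upperBounds_pair.2 ⟨Set.subset_union_left.trans hsub, Set.subset_union_right.trans hsub⟩,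
    fun s hs => ?_⟩
  obtain ⟨hus, hvs⟩ := mem_upperBounds_pair.1 hs
  change _ ⊆ s.1
  rw [← s.2.2.2]
  exact lowerBounds_mono_set (upperBounds_mono_set (Set.union_subset hus hvs))

lemma exists_isGLB_pair {u v w : DMC M} (hu : w ≤ u) (hv : w ≤ v) : ∃ s, IsGLB {u, v} s := by
  have hinter : u.1 ∩ v.1 = lowerBounds (upperBounds u.1 ∪ upperBounds v.1) := by
    rw [lowerBounds_union, u.2.2.2, v.2.2.2]
  have hcut : IsCut (u.1 ∩ v.1) := hinter ▸
    isCut_lowerBounds (u.2.2.1.mono Set.subset_union_left)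
      (hinter ▸ w.2.1.mono (Set.subset_inter hu hv))
  refine ⟨⟨_, hcut⟩, mem_lowerBounds_pair.2 ⟨Set.inter_subset_left, Set.inter_subset_right⟩,
    fun s hs => ?_⟩
  obtain ⟨hsu, hsv⟩ := mem_lowerBounds_pair.1 hs
  exact Set.subset_inter hsu hsv

end DMC

end Completion

/-- If all intervals of `M^D` are chains, then the ramification points of
`M` and of `M^D` coincide: `p` is an infimum (resp. supremum) of two incomparable elements
of `M` iff it is an infimum (resp. supremum) of two incomparable elements of `M^D`. -/
theorem ram_eq_ram_of_completion (M : Type*) [PartialOrder M]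
    (h : ∀ a b : DMC M, a ≤ b → IsChain (· ≤ ·) (Set.Icc a b)) :
    ∀ p : DMC M,
      ((p ∈ upRam M) ↔ ∃ u v : DMC M, ¬ u ≤ v ∧ ¬ v ≤ u ∧ IsGLB {u, v} p) ∧
      ((p ∈ downRam M) ↔ ∃ u v : DMC M, ¬ u ≤ v ∧ ¬ v ≤ u ∧ IsLUB {u, v} p) := by
  intro p
  refine ⟨⟨?_, ?_⟩, ⟨?_, ?_⟩⟩
  · rintro ⟨a, b, hab, hba, hp⟩
    exact ⟨_, _, mt principalCut_le_principalCut.1 hab, mt principalCut_le_principalCut.1 hba, hp⟩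
  · rintro ⟨u, v, huv, hvu, hp⟩
    exact hp.exists_isGLB_of_cofinal h (fun _ _ _ => DMC.exists_isLUB_pair) monotone_principalCut
      DMC.exists_le_principalCut huv hvu
  · rintro ⟨a, b, hab, hba, hp⟩
    exact ⟨_, _, mt principalCut_le_principalCut.1 hab, mt principalCut_le_principalCut.1 hba, hp⟩
  · rintro ⟨u, v, huv, hvu, hp⟩
    exact hp.exists_isLUB_of_coinitial h (fun _ _ _ => DMC.exists_isGLB_pair) monotone_principalCut
      DMC.exists_principalCut_le huv hvu
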